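/- arXiv:2605.12161 — 3 statements merged into one kernel-verified Lean document; each statement's English description precedes it below -/
import Mathlib

section
/- The optimal value of the simplex-constrained fsFGW problem satisfies both bounds: (i) α·GW* ≤ inf{ F_S(T,w) : T ∈ U(a,b), w ∈ Δ^{d−1} }, and (ii) for every T ∈ U(a,b), inf{ F_S(T',w) : T' ∈ U(a,b), w ∈ Δ^{d−1} } ≤ (1−α) Σ_{r=1}^d s_r(T) + α GW(T) − (1−α)·min_{1≤r≤d} s_r(T); in particular the optimal simplex-constrained fsFGW value is at most the classical FGW value FGW*. -/
/-- A probability vector: nonnegative entries summing to 1. -/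
def IsProb {n : ℕ} (a : Fin n → ℝ) : Prop := (∀ i, 0 ≤ a i) ∧ ∑ i, a i = 1

/-- Membership in the transport polytope U(a,b). -/
def InU {n m : ℕ} (a : Fin n → ℝ) (b : Fin m → ℝ) (T : Matrix (Fin n) (Fin m) ℝ) : Prop :=
  (∀ i j, 0 ≤ T i j) ∧ (∀ i, ∑ j, T i j = a i) ∧ (∀ j, ∑ i, T i j = b j)

/-- Feature score `s_r(T) = Σ_{i,j} T_{ij} |X_{ir} − Y_{jr}|^q`. -/
noncomputable def score {n m d : ℕ} (q : ℝ) (X : Matrix (Fin n) (Fin d) ℝ)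
    (Y : Matrix (Fin m) (Fin d) ℝ) (T : Matrix (Fin n) (Fin m) ℝ) (r : Fin d) : ℝ :=
  ∑ i, ∑ j, T i j * |X i r - Y j r| ^ q

/-- Gromov–Wasserstein term `GW(T) = Σ |C^X_{ii'} − C^Y_{jj'}|^q T_{ij} T_{i'j'}`. -/
noncomputable def gwTerm {n m : ℕ} (q : ℝ) (CX : Matrix (Fin n) (Fin n) ℝ)
    (CY : Matrix (Fin m) (Fin m) ℝ) (T : Matrix (Fin n) (Fin m) ℝ) : ℝ :=
  ∑ i, ∑ i', ∑ j, ∑ j', |CX i i' - CY j j'| ^ q * T i j * T i' j'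

/-- Simplex-constrained fsFGW objective. -/
noncomputable def FS {n m d : ℕ} (q α : ℝ)
    (CX : Matrix (Fin n) (Fin n) ℝ) (CY : Matrix (Fin m) (Fin m) ℝ)
    (X : Matrix (Fin n) (Fin d) ℝ) (Y : Matrix (Fin m) (Fin d) ℝ)
    (T : Matrix (Fin n) (Fin m) ℝ) (w : Fin d → ℝ) : ℝ :=
  (1 - α) * ∑ r, (1 - w r) * score q X Y T r + α * gwTerm q CX CY T

/-!
For `w` in the simplex every weight `1 - w r` lies in `[0, 1]`, so the feature part of `F_S` is
nonnegative and `F_S(T, w) ≥ α GW(T) ≥ α GW*`. For the upper bound, evaluate `F_S(T, ·)` at the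
vertex of the simplex sitting on a feature of minimal score: it removes exactly that score from
the FGW objective.
-/

open Finset

section Objective

variable {n m d : ℕ} (q : ℝ) {α : ℝ} (CX : Matrix (Fin n) (Fin n) ℝ) (CY : Matrix (Fin m) (Fin m) ℝ)
  (X : Matrix (Fin n) (Fin d) ℝ) (Y : Matrix (Fin m) (Fin d) ℝ) {T : Matrix (Fin n) (Fin m) ℝ}

lemma score_nonneg (hT : ∀ i j, 0 ≤ T i j) (r : Fin d) : 0 ≤ score q X Y T r :=
  sum_nonneg fun i _ => sum_nonneg fun j _ => mul_nonneg (hT i j) (by positivity)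

lemma gwTerm_nonneg (hT : ∀ i j, 0 ≤ T i j) : 0 ≤ gwTerm q CX CY T :=
  sum_nonneg fun i _ => sum_nonneg fun i' _ => sum_nonneg fun j _ => sum_nonneg fun j' _ =>
    mul_nonneg (mul_nonneg (by positivity) (hT i j)) (hT i' j')

lemma FS_single (T : Matrix (Fin n) (Fin m) ℝ) (r : Fin d) :
    FS q α CX CY X Y T (Pi.single r 1) =
      (1 - α) * (∑ s, score q X Y T s - score q X Y T r) + α * gwTerm q CX CY T := by
  simp [FS, sub_mul, sum_sub_distrib, Pi.single_apply]

lemma mul_gwTerm_le_FS (hα : α ≤ 1) (hT : ∀ i j, 0 ≤ T i j) {w : Fin d → ℝ}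
    (hw : w ∈ stdSimplex ℝ (Fin d)) : α * gwTerm q CX CY T ≤ FS q α CX CY X Y T w :=
  le_add_of_nonneg_left <| mul_nonneg (sub_nonneg.2 hα) <| sum_nonneg fun r _ =>
    mul_nonneg (sub_nonneg.2 (mem_Icc_of_mem_stdSimplex hw r).2) (score_nonneg q X Y hT r)

end Objective

lemma mul_sInf_le_sInf {S G : Set ℝ} {α : ℝ} (hα : 0 ≤ α) (hG : BddBelow G)
    (hne : G.Nonempty → S.Nonempty) (h : ∀ s ∈ S, ∃ g ∈ G, α * g ≤ s) :
    α * sInf G ≤ sInf S := by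
  rcases S.eq_empty_or_nonempty with rfl | hS
  · rw [Set.not_nonempty_iff_eq_empty.1 (mt hne Set.not_nonempty_empty), Real.sInf_empty,
      mul_zero]
  · refine le_csInf hS fun s hs => ?_
    obtain ⟨g, hg, hgs⟩ := h s hs
    exact (mul_le_mul_of_nonneg_left (csInf_le hG hg) hα).trans hgs

theorem simplex_fsFGW_bounds_general (n m d : ℕ) (hd : 1 ≤ d)
    (q : ℝ) (α : ℝ) (hα : α ∈ Set.Icc (0:ℝ) 1)
    (a : Fin n → ℝ) (b : Fin m → ℝ)
    (CX : Matrix (Fin n) (Fin n) ℝ) (CY : Matrix (Fin m) (Fin m) ℝ)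
    (X : Matrix (Fin n) (Fin d) ℝ) (Y : Matrix (Fin m) (Fin d) ℝ) :
    α * sInf {v : ℝ | ∃ T, InU a b T ∧ v = gwTerm q CX CY T} ≤
      sInf {v : ℝ | ∃ T w, InU a b T ∧ ((∀ r, 0 ≤ w r) ∧ ∑ r, w r = 1) ∧
        v = FS q α CX CY X Y T w} ∧
    ∀ T, InU a b T →
      sInf {v : ℝ | ∃ T' w, InU a b T' ∧ ((∀ r, 0 ≤ w r) ∧ ∑ r, w r = 1) ∧
        v = FS q α CX CY X Y T' w} ≤
      (1 - α) * ∑ r, score q X Y T r + α * gwTerm q CX CY T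
        - (1 - α) * sInf (Set.range fun r => score q X Y T r) := by
  have : Nonempty (Fin d) := ⟨⟨0, hd⟩⟩
  have hFS_lower (T : Matrix (Fin n) (Fin m) ℝ) (w : Fin d → ℝ) (hT : InU a b T)
      (hw : w ∈ stdSimplex ℝ (Fin d)) : α * gwTerm q CX CY T ≤ FS q α CX CY X Y T w :=
    mul_gwTerm_le_FS q CX CY X Y hα.2 hT.1 hw
  refine ⟨mul_sInf_le_sInf hα.1 ⟨0, ?_⟩ ?_ ?_, fun T hT => ?_⟩
  · rintro _ ⟨T, hT, rfl⟩
    exact gwTerm_nonneg q CX CY hT.1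
  · rintro ⟨_, T, hT, rfl⟩
    exact ⟨_, T, _, hT, single_mem_stdSimplex ℝ ⟨0, hd⟩, rfl⟩
  · rintro _ ⟨T, w, hT, hw, rfl⟩
    exact ⟨_, ⟨T, hT, rfl⟩, hFS_lower T w hT hw⟩
  · obtain ⟨r, hr⟩ := exists_eq_ciInf_of_finite (f := score q X Y T)
    have hbdd : BddBelow {v : ℝ | ∃ T' w, InU a b T' ∧ ((∀ r, 0 ≤ w r) ∧ ∑ r, w r = 1) ∧
        v = FS q α CX CY X Y T' w} := by
      refine ⟨0, ?_⟩
      rintro _ ⟨T', w, hT', hw, rfl⟩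
      exact (mul_nonneg hα.1 (gwTerm_nonneg q CX CY hT'.1)).trans (hFS_lower T' w hT' hw)
    calc _ ≤ FS q α CX CY X Y T (Pi.single r 1) :=
          csInf_le hbdd ⟨T, _, hT, single_mem_stdSimplex ℝ r, rfl⟩
      _ = _ := by
        rw [FS_single, show sInf (Set.range fun r => score q X Y T r) = score q X Y T r from
          hr.symm]
        ring

/-- bounds for the simplex-constrained fsFGW value. -/
theorem simplex_fsFGW_bounds (n m d : ℕ) (hn : 1 ≤ n) (hm : 1 ≤ m) (hd : 1 ≤ d)
    (q : ℝ) (hq : 1 ≤ q) (α : ℝ) (hα : α ∈ Set.Icc (0:ℝ) 1)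
    (a : Fin n → ℝ) (b : Fin m → ℝ) (ha : IsProb a) (hb : IsProb b)
    (CX : Matrix (Fin n) (Fin n) ℝ) (CY : Matrix (Fin m) (Fin m) ℝ)
    (X : Matrix (Fin n) (Fin d) ℝ) (Y : Matrix (Fin m) (Fin d) ℝ) :
    α * sInf {v : ℝ | ∃ T, InU a b T ∧ v = gwTerm q CX CY T} ≤
      sInf {v : ℝ | ∃ T w, InU a b T ∧ ((∀ r, 0 ≤ w r) ∧ ∑ r, w r = 1) ∧
        v = FS q α CX CY X Y T w} ∧
    ∀ T, InU a b T →
      sInf {v : ℝ | ∃ T' w, InU a b T' ∧ ((∀ r, 0 ≤ w r) ∧ ∑ r, w r = 1) ∧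
        v = FS q α CX CY X Y T' w} ≤
      (1 - α) * ∑ r, score q X Y T r + α * gwTerm q CX CY T
        - (1 - α) * sInf (Set.range fun r => score q X Y T r) :=
  simplex_fsFGW_bounds_general n m d hd q α hα a b CX CY X Y
end

section
/- The joint Lasso-regularized fsFGW problem reduces to an optimization over the transport plan alone: inf{ F_L(T,w) : T ∈ U(a,b), w ∈ [0,1]^d } = inf{ Σ_{r=1}^d min((1−α)·s_r(T), λ) + α GW(T) : T ∈ U(a,b) }. -/
/-- Lasso-regularized fsFGW objective. -/
noncomputable def FL {n m d : ℕ} (q α lam : ℝ)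
    (CX : Matrix (Fin n) (Fin n) ℝ) (CY : Matrix (Fin m) (Fin m) ℝ)
    (X : Matrix (Fin n) (Fin d) ℝ) (Y : Matrix (Fin m) (Fin d) ℝ)
    (T : Matrix (Fin n) (Fin m) ℝ) (w : Fin d → ℝ) : ℝ :=
  (1 - α) * ∑ r, (1 - w r) * score q X Y T r + α * gwTerm q CX CY T + lam * ∑ r, w r

/-!
For a fixed plan `T`, the `r`-th feature term `(1 - w_r) (1 - α) s_r(T) + w_r λ` of the objective
is a convex combination of `(1 - α) s_r(T)` and `λ`, so it is at least their minimum, and the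
minimum is attained at a thresholding weight `w_r ∈ {0, 1}`. Hence every value of the joint
problem dominates a value of the reduced one and vice versa, which forces equal infima even when
the value sets are empty or unbounded below.
-/

open Finset

section WeightedMin

variable {ι : Type*}

theorem sum_min_le_sum_weighted [Fintype ι] (c : ι → ℝ) (lam : ℝ) {w : ι → ℝ}
    (hw : ∀ r, w r ∈ Set.Icc (0 : ℝ) 1) :
    ∑ r, min (c r) lam ≤ ∑ r, ((1 - w r) * c r + w r * lam) :=
  sum_le_sum fun r _ =>
    Convex.min_le_combo (c r) lam (sub_nonneg.2 (hw r).2) (hw r).1 (sub_add_cancel 1 (w r))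

noncomputable def thresholdWeight (c : ι → ℝ) (lam : ℝ) (r : ι) : ℝ :=
  if c r ≤ lam then 0 else 1

theorem thresholdWeight_mem_Icc (c : ι → ℝ) (lam : ℝ) (r : ι) :
    thresholdWeight c lam r ∈ Set.Icc (0 : ℝ) 1 := by
  unfold thresholdWeight
  split_ifs <;> norm_num

theorem sum_weighted_thresholdWeight [Fintype ι] (c : ι → ℝ) (lam : ℝ) :
    ∑ r, ((1 - thresholdWeight c lam r) * c r + thresholdWeight c lam r * lam)
      = ∑ r, min (c r) lam := by
  refine sum_congr rfl fun r _ => ?_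
  unfold thresholdWeight
  split_ifs with h
  · simp [min_eq_left h]
  · simp [min_eq_right (le_of_not_ge h)]

end WeightedMin

theorem FL_eq_sum_weighted_add_gwTerm {n m d : ℕ} (q α lam : ℝ)
    (CX : Matrix (Fin n) (Fin n) ℝ) (CY : Matrix (Fin m) (Fin m) ℝ)
    (X : Matrix (Fin n) (Fin d) ℝ) (Y : Matrix (Fin m) (Fin d) ℝ)
    (T : Matrix (Fin n) (Fin m) ℝ) (w : Fin d → ℝ) :
    FL q α lam CX CY X Y T w
      = ∑ r, ((1 - w r) * ((1 - α) * score q X Y T r) + w r * lam)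
        + α * gwTerm q CX CY T := by
  rw [FL, mul_sum, mul_sum, sum_add_distrib]
  have hfeature : ∀ r, (1 - α) * ((1 - w r) * score q X Y T r)
      = (1 - w r) * ((1 - α) * score q X Y T r) := fun r => by ring
  simp only [hfeature, mul_comm lam]
  ring

theorem lasso_fsFGW_reduction_general (n m d : ℕ)
    (q : ℝ) (α lam : ℝ)
    (a : Fin n → ℝ) (b : Fin m → ℝ)
    (CX : Matrix (Fin n) (Fin n) ℝ) (CY : Matrix (Fin m) (Fin m) ℝ)
    (X : Matrix (Fin n) (Fin d) ℝ) (Y : Matrix (Fin m) (Fin d) ℝ) :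
    sInf {v : ℝ | ∃ T w, InU a b T ∧ (∀ r, w r ∈ Set.Icc (0:ℝ) 1) ∧
        v = FL q α lam CX CY X Y T w}
      = sInf {v : ℝ | ∃ T, InU a b T ∧
        v = (∑ r, min ((1 - α) * score q X Y T r) lam) + α * gwTerm q CX CY T} := by
  refine csInf_eq_csInf_of_forall_exists_le ?_ ?_
  · rintro v ⟨T, w, hT, hw, rfl⟩
    refine ⟨_, ⟨T, hT, rfl⟩, ?_⟩
    rw [FL_eq_sum_weighted_add_gwTerm]
    exact add_le_add_left (sum_min_le_sum_weighted _ lam hw) _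
  · rintro v ⟨T, hT, rfl⟩
    let c := fun r => (1 - α) * score q X Y T r
    refine ⟨_, ⟨T, thresholdWeight c lam, hT, thresholdWeight_mem_Icc c lam, rfl⟩, ?_⟩
    rw [FL_eq_sum_weighted_add_gwTerm, sum_weighted_thresholdWeight c lam]

/-- the joint Lasso fsFGW problem reduces to an optimization
over the transport plan alone. -/
theorem lasso_fsFGW_reduction (n m d : ℕ) (hn : 1 ≤ n) (hm : 1 ≤ m) (hd : 1 ≤ d)
    (q : ℝ) (hq : 1 ≤ q) (α lam : ℝ) (hα : α ∈ Set.Icc (0:ℝ) 1) (hlam : 0 < lam)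
    (a : Fin n → ℝ) (b : Fin m → ℝ) (ha : IsProb a) (hb : IsProb b)
    (CX : Matrix (Fin n) (Fin n) ℝ) (CY : Matrix (Fin m) (Fin m) ℝ)
    (X : Matrix (Fin n) (Fin d) ℝ) (Y : Matrix (Fin m) (Fin d) ℝ) :
    sInf {v : ℝ | ∃ T w, InU a b T ∧ (∀ r, w r ∈ Set.Icc (0:ℝ) 1) ∧
        v = FL q α lam CX CY X Y T w}
      = sInf {v : ℝ | ∃ T, InU a b T ∧
        v = (∑ r, min ((1 - α) * score q X Y T r) lam) + α * gwTerm q CX CY T} :=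
  lasso_fsFGW_reduction_general n m d q α lam a b CX CY X Y
end

section
/- Discrete gluing with score and GW bounds: let a ∈ ℝ^n, b ∈ ℝ^m, c ∈ ℝ^p be probability vectors with b_j > 0 for every j, let T₁ ∈ U(a,b) and T₂ ∈ U(b,c), and define T₃ ∈ ℝ^{n×p} by (T₃)_{ik} = Σ_j T₁)_{ij} (T₂)_{jk} / b_j. Then T₃ ∈ U(a,c), and for every feature index r = 1,…,d, s_r^{XZ}(T₃) ≤ 2^{q−1} ( s_r^{XY}(T₁) + s_r^{YZ}(T₂) ), and GW^{XZ}(T₃) ≤ 2^{q−1} ( GW^{XY}(T₁) + GW^{YZ}(T₂) ); when q = 1 the factor 2^{q−1} equals 1. -/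
/-!
The glued plan `T₃ = T₁ diag(b)⁻¹ T₂` is the `j`-marginal of the three-index plan
`w i j k = T₁ i j * T₂ j k / b j`, whose `(i, j)`- and `(j, k)`-marginals are `T₁` and `T₂`.
So any costs with `f i k ≤ M * (g i j + h j k)` satisfy `⟨T₃, f⟩ ≤ M * (⟨T₁, g⟩ + ⟨T₂, h⟩)`;
for `|x - z| ^ q` this holds with `M = 2 ^ (q - 1)` by the triangle inequality and convexity
of `t ↦ t ^ q`. The GW term of `T` is such a transport cost for `T ⊗ₖ T` on pairs of points,
and gluing commutes with Kronecker products, so the GW bound is the same inequality on pairs.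
-/

open Matrix
open scoped Kronecker

lemma abs_sub_rpow_le_two_rpow_mul {q : ℝ} (hq : 1 ≤ q) (x y z : ℝ) :
    |x - z| ^ q ≤ 2 ^ (q - 1) * (|x - y| ^ q + |y - z| ^ q) := by
  have h := NNReal.rpow_add_le_mul_rpow_add_rpow (Real.nnabs (x - y)) (Real.nnabs (y - z)) hq
  calc |x - z| ^ q ≤ (|x - y| + |y - z|) ^ q :=
        Real.rpow_le_rpow (abs_nonneg _) (abs_sub_le x y z) (by linarith)
    _ ≤ 2 ^ (q - 1) * (|x - y| ^ q + |y - z| ^ q) := by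
        simpa [← NNReal.coe_le_coe, NNReal.coe_rpow] using h

lemma sum_mul_div_cancel_right {μ : Type*} [Fintype μ] {x s : ℝ} {y : μ → ℝ} (hs : s ≠ 0)
    (hy : ∑ k, y k = s) : ∑ k, x * y k / s = x := by
  rw [← Finset.sum_div, ← Finset.mul_sum, hy, mul_div_cancel_right₀ _ hs]

lemma sum_mul_div_cancel_left {ι : Type*} [Fintype ι] {x : ι → ℝ} {y s : ℝ} (hs : s ≠ 0)
    (hx : ∑ i, x i = s) : ∑ i, x i * y / s = y := by
  rw [← Finset.sum_div, ← Finset.sum_mul, hx, mul_div_cancel_left₀ _ hs]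

section Gluing

variable {ι κ μ : Type*}

lemma sum_mul_le_of_marginals [Fintype ι] [Fintype κ] [Fintype μ] (w : ι → κ → μ → ℝ)
    (hw : ∀ i j k, 0 ≤ w i j k)
    {A : ι → κ → ℝ} {B : κ → μ → ℝ} (hA : ∀ i j, ∑ k, w i j k = A i j)
    (hB : ∀ j k, ∑ i, w i j k = B j k) {M : ℝ} {f : ι → μ → ℝ} {g : ι → κ → ℝ}
    {h : κ → μ → ℝ} (hf : ∀ i j k, f i k ≤ M * (g i j + h j k)) :
    ∑ i, ∑ k, (∑ j, w i j k) * f i k ≤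
      M * (∑ i, ∑ j, A i j * g i j + ∑ j, ∑ k, B j k * h j k) :=
  calc ∑ i, ∑ k, (∑ j, w i j k) * f i k
      ≤ ∑ i, ∑ k, ∑ j, w i j k * (M * (g i j + h j k)) := by
        simp_rw [Finset.sum_mul]
        gcongr with i _ k _ j _
        exacts [hw i j k, hf i j k]
    _ = M * (∑ i, ∑ j, (∑ k, w i j k) * g i j + ∑ j, ∑ k, (∑ i, w i j k) * h j k) := by
        simp only [Finset.sum_mul, Finset.mul_sum, mul_add, Finset.sum_add_distrib]
        simp only [mul_left_comm (w _ _ _)]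
        congr 1
        · exact Finset.sum_congr rfl fun _ _ => Finset.sum_comm
        · rw [Finset.sum_comm_cycle]
          exact Finset.sum_congr rfl fun _ _ => Finset.sum_comm
    _ = _ := by simp_rw [hA, hB]

noncomputable def glue [Fintype κ] (T₁ : Matrix ι κ ℝ) (T₂ : Matrix κ μ ℝ) (b : κ → ℝ) :
    Matrix ι μ ℝ :=
  fun i k => ∑ j, T₁ i j * T₂ j k / b j

variable {T₁ : Matrix ι κ ℝ} {T₂ : Matrix κ μ ℝ} {b : κ → ℝ}

lemma sum_glue_row [Fintype κ] [Fintype μ] (hb : ∀ j, b j ≠ 0) (h₂ : ∀ j, ∑ k, T₂ j k = b j)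
    (i : ι) : ∑ k, glue T₁ T₂ b i k = ∑ j, T₁ i j := by
  simp only [glue]
  rw [Finset.sum_comm]
  exact Finset.sum_congr rfl fun j _ => sum_mul_div_cancel_right (hb j) (h₂ j)

lemma sum_glue_col [Fintype ι] [Fintype κ] (hb : ∀ j, b j ≠ 0) (h₁ : ∀ j, ∑ i, T₁ i j = b j)
    (k : μ) : ∑ i, glue T₁ T₂ b i k = ∑ j, T₂ j k := by
  simp only [glue]
  rw [Finset.sum_comm]
  exact Finset.sum_congr rfl fun j _ => sum_mul_div_cancel_left (hb j) (h₁ j)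

lemma glue_nonneg [Fintype κ] (hT₁ : ∀ i j, 0 ≤ T₁ i j) (hT₂ : ∀ j k, 0 ≤ T₂ j k)
    (hb : ∀ j, 0 ≤ b j) (i : ι) (k : μ) : 0 ≤ glue T₁ T₂ b i k :=
  Finset.sum_nonneg fun j _ => div_nonneg (mul_nonneg (hT₁ i j) (hT₂ j k)) (hb j)

lemma sum_glue_mul_le [Fintype ι] [Fintype κ] [Fintype μ] (hT₁ : ∀ i j, 0 ≤ T₁ i j)
    (hT₂ : ∀ j k, 0 ≤ T₂ j k) (hb : ∀ j, 0 < b j) (h₁ : ∀ j, ∑ i, T₁ i j = b j)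
    (h₂ : ∀ j, ∑ k, T₂ j k = b j)
    {M : ℝ} {f : ι → μ → ℝ} {g : ι → κ → ℝ} {h : κ → μ → ℝ}
    (hf : ∀ i j k, f i k ≤ M * (g i j + h j k)) :
    ∑ i, ∑ k, glue T₁ T₂ b i k * f i k ≤
      M * (∑ i, ∑ j, T₁ i j * g i j + ∑ j, ∑ k, T₂ j k * h j k) :=
  sum_mul_le_of_marginals (fun i j k => T₁ i j * T₂ j k / b j)
    (fun i j k => div_nonneg (mul_nonneg (hT₁ i j) (hT₂ j k)) (hb j).le)
    (fun _ j => sum_mul_div_cancel_right (hb j).ne' (h₂ j))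
    (fun j _ => sum_mul_div_cancel_left (hb j).ne' (h₁ j)) hf

lemma glue_kronecker [Fintype κ] {ι' κ' μ' : Type*} [Fintype κ'] (T₁' : Matrix ι' κ' ℝ)
    (T₂' : Matrix κ' μ' ℝ) (b' : κ' → ℝ) :
    glue (T₁ ⊗ₖ T₁') (T₂ ⊗ₖ T₂') (fun J => b J.1 * b' J.2) =
      glue T₁ T₂ b ⊗ₖ glue T₁' T₂' b' := by
  ext ⟨i, i'⟩ ⟨k, k'⟩
  simp only [glue, kronecker_apply, Fintype.sum_prod_type, Finset.sum_mul_sum]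
  refine Finset.sum_congr rfl fun j _ => Finset.sum_congr rfl fun j' _ => ?_
  ring

end Gluing

lemma sum_kronecker_col {ι ι' κ κ' : Type*} [Fintype ι] [Fintype ι'] (A : Matrix ι κ ℝ)
    (A' : Matrix ι' κ' ℝ) (J : κ × κ') :
    ∑ I, (A ⊗ₖ A') I J = (∑ i, A i J.1) * ∑ i', A' i' J.2 := by
  rw [Fintype.sum_prod_type, Finset.sum_mul_sum]
  rfl

lemma sum_kronecker_row {ι ι' κ κ' : Type*} [Fintype κ] [Fintype κ'] (A : Matrix ι κ ℝ)
    (A' : Matrix ι' κ' ℝ) (I : ι × ι') :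
    ∑ J, (A ⊗ₖ A') I J = (∑ j, A I.1 j) * ∑ j', A' I.2 j' := by
  rw [Fintype.sum_prod_type, Finset.sum_mul_sum]
  rfl

lemma InU.glue {n m p : ℕ} {a : Fin n → ℝ} {b : Fin m → ℝ} {c : Fin p → ℝ}
    {T₁ : Matrix (Fin n) (Fin m) ℝ} {T₂ : Matrix (Fin m) (Fin p) ℝ} (h₁ : InU a b T₁)
    (h₂ : InU b c T₂) (hb : ∀ j, 0 < b j) : InU a c (glue T₁ T₂ b) :=
  ⟨glue_nonneg h₁.1 h₂.1 fun j => (hb j).le,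
    fun i => (sum_glue_row (fun j => (hb j).ne') h₂.2.1 i).trans (h₁.2.1 i),
    fun k => (sum_glue_col (fun j => (hb j).ne') h₁.2.2 k).trans (h₂.2.2 k)⟩

lemma gwTerm_eq_sum_kronecker {n m : ℕ} (q : ℝ) (CX : Matrix (Fin n) (Fin n) ℝ)
    (CY : Matrix (Fin m) (Fin m) ℝ) (T : Matrix (Fin n) (Fin m) ℝ) :
    gwTerm q CX CY T = ∑ I, ∑ J, (T ⊗ₖ T) I J * |CX I.1 I.2 - CY J.1 J.2| ^ q := by
  simp only [gwTerm, kronecker_apply, Fintype.sum_prod_type]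
  refine Finset.sum_congr rfl fun i _ => Finset.sum_congr rfl fun i' _ =>
    Finset.sum_congr rfl fun j _ => Finset.sum_congr rfl fun j' _ => ?_
  ring

theorem glued_coupling_bounds_general (n m p d : ℕ)
    (q : ℝ) (hq : 1 ≤ q)
    (a : Fin n → ℝ) (b : Fin m → ℝ) (c : Fin p → ℝ)
    (hbpos : ∀ j, 0 < b j)
    (CX : Matrix (Fin n) (Fin n) ℝ) (CY : Matrix (Fin m) (Fin m) ℝ)
    (CZ : Matrix (Fin p) (Fin p) ℝ)
    (X : Matrix (Fin n) (Fin d) ℝ) (Y : Matrix (Fin m) (Fin d) ℝ)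
    (Z : Matrix (Fin p) (Fin d) ℝ)
    (T1 : Matrix (Fin n) (Fin m) ℝ) (T2 : Matrix (Fin m) (Fin p) ℝ)
    (hT1 : InU a b T1) (hT2 : InU b c T2) :
    InU a c (fun i k => ∑ j, T1 i j * T2 j k / b j) ∧
    (∀ r, score q X Z (fun i k => ∑ j, T1 i j * T2 j k / b j) r ≤
      (2:ℝ) ^ (q - 1) * (score q X Y T1 r + score q Y Z T2 r)) ∧
    gwTerm q CX CZ (fun i k => ∑ j, T1 i j * T2 j k / b j) ≤
      (2:ℝ) ^ (q - 1) * (gwTerm q CX CY T1 + gwTerm q CY CZ T2) ∧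
    (q = 1 → (2:ℝ) ^ (q - 1) = 1) := by
  refine ⟨hT1.glue hT2 hbpos, ?_⟩
  obtain ⟨hT1nonneg, -, hT1col⟩ := hT1
  obtain ⟨hT2nonneg, hT2row, -⟩ := hT2
  refine ⟨fun r => ?_, ?_, fun hq1 => by simp [hq1]⟩
  · exact sum_glue_mul_le hT1nonneg hT2nonneg hbpos hT1col hT2row
      fun i j k => abs_sub_rpow_le_two_rpow_mul hq (X i r) (Y j r) (Z k r)
  · change gwTerm q CX CZ (glue T1 T2 b) ≤ _
    simp only [gwTerm_eq_sum_kronecker, ← glue_kronecker]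
    exact sum_glue_mul_le (fun _ _ => mul_nonneg (hT1nonneg _ _) (hT1nonneg _ _))
      (fun _ _ => mul_nonneg (hT2nonneg _ _) (hT2nonneg _ _))
      (fun _ => mul_pos (hbpos _) (hbpos _))
      (fun J => (sum_kronecker_col T1 T1 J).trans (by rw [hT1col, hT1col]))
      (fun J => (sum_kronecker_row T2 T2 J).trans (by rw [hT2row, hT2row]))
      fun I J K => abs_sub_rpow_le_two_rpow_mul hq (CX I.1 I.2) (CY J.1 J.2) (CZ K.1 K.2)

/-- discrete gluing with feature-score and GW bounds. -/
theorem glued_coupling_bounds (n m p d : ℕ)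
    (hn : 1 ≤ n) (hm : 1 ≤ m) (hp : 1 ≤ p) (hd : 1 ≤ d)
    (q : ℝ) (hq : 1 ≤ q)
    (a : Fin n → ℝ) (b : Fin m → ℝ) (c : Fin p → ℝ)
    (ha : IsProb a) (hb : IsProb b) (hc : IsProb c) (hbpos : ∀ j, 0 < b j)
    (CX : Matrix (Fin n) (Fin n) ℝ) (CY : Matrix (Fin m) (Fin m) ℝ)
    (CZ : Matrix (Fin p) (Fin p) ℝ)
    (X : Matrix (Fin n) (Fin d) ℝ) (Y : Matrix (Fin m) (Fin d) ℝ)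
    (Z : Matrix (Fin p) (Fin d) ℝ)
    (T1 : Matrix (Fin n) (Fin m) ℝ) (T2 : Matrix (Fin m) (Fin p) ℝ)
    (hT1 : InU a b T1) (hT2 : InU b c T2) :
    InU a c (fun i k => ∑ j, T1 i j * T2 j k / b j) ∧
    (∀ r, score q X Z (fun i k => ∑ j, T1 i j * T2 j k / b j) r ≤
      (2:ℝ) ^ (q - 1) * (score q X Y T1 r + score q Y Z T2 r)) ∧
    gwTerm q CX CZ (fun i k => ∑ j, T1 i j * T2 j k / b j) ≤
      (2:ℝ) ^ (q - 1) * (gwTerm q CX CY T1 + gwTerm q CY CZ T2) ∧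
    (q = 1 → (2:ℝ) ^ (q - 1) = 1) :=
  glued_coupling_bounds_general n m p d q hq a b c hbpos CX CY CZ X Y Z T1 T2 hT1 hT2
end
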